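/- For a linear classifier with logit a_θ(x) = θ ⬝ v(x) (inner product in ℝ^d), the gradient of the entropy loss Ent(θ ⬝ v) with respect to the parameter θ equals -ŷ · C · v, where ŷ = 1 if θ ⬝ v > 0 and ŷ = -1 otherwise, and C = |log((1-p)/p) · p · (1-p)| > 0 with p = σ(θ ⬝ v), provided θ ⬝ v ≠ 0. -/

import Mathlib

open RealInnerProductSpace

noncomputable def sigmoid (a : ℝ) : ℝ := 1 / (1 + Real.exp (-a))

noncomputable def sigEnt (a : ℝ) : ℝ :=
  -sigmoid a * Real.log (sigmoid a) - (1 - sigmoid a) * Real.log (1 - sigmoid a)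

/-!
The log-odds of the sigmoid undo it: `log ((1 - σ a) / σ a) = -a`. Since `sigEnt` is the binary
entropy of `σ a`, the chain rule gives `sigEnt' a = log ((1 - σ a) / σ a) · σ a (1 - σ a)
= -a · σ a (1 - σ a)`, and composing with the linear map `θ ↦ ⟪θ, v⟫` turns this into the
gradient `-a · p (1 - p) • v`. Finally `-a = -ŷ |a|`, and `|a| p (1 - p) > 0` when `a ≠ 0`.
-/

theorem sigmoid_eq_real_sigmoid : sigmoid = Real.sigmoid :=
  funext fun _ => one_div _

theorem sigmoid_pos (a : ℝ) : 0 < sigmoid a :=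
  sigmoid_eq_real_sigmoid ▸ Real.sigmoid_pos a

theorem sigmoid_lt_one (a : ℝ) : sigmoid a < 1 :=
  sigmoid_eq_real_sigmoid ▸ Real.sigmoid_lt_one a

theorem sigEnt_eq_binEntropy (a : ℝ) : sigEnt a = Real.binEntropy (sigmoid a) := by
  simp only [sigEnt, Real.binEntropy, Real.log_inv]
  ring

theorem one_sub_sigmoid_div_sigmoid (a : ℝ) : (1 - sigmoid a) / sigmoid a = Real.exp (-a) := by
  rw [div_eq_iff (sigmoid_pos a).ne', sigmoid_eq_real_sigmoid, ← Real.sigmoid_neg,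
    ← Real.sigmoid_mul_rexp_neg, mul_comm]

theorem log_one_sub_sigmoid_div_sigmoid (a : ℝ) :
    Real.log ((1 - sigmoid a) / sigmoid a) = -a := by
  rw [one_sub_sigmoid_div_sigmoid, Real.log_exp]

theorem hasDerivAt_sigEnt (a : ℝ) :
    HasDerivAt sigEnt (-(a * (sigmoid a * (1 - sigmoid a)))) a := by
  have hσ₀ : sigmoid a ≠ 0 := (sigmoid_pos a).ne'
  have hσ₁ : 1 - sigmoid a ≠ 0 := sub_ne_zero.2 (sigmoid_lt_one a).ne'
  have hσ : HasDerivAt sigmoid (sigmoid a * (1 - sigmoid a)) a := by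
    rw [sigmoid_eq_real_sigmoid]; exact Real.hasDerivAt_sigmoid a
  have hH := (Real.hasDerivAt_binEntropy hσ₀ (sigmoid_lt_one a).ne).comp a hσ
  rw [← Real.log_div hσ₁ hσ₀, log_one_sub_sigmoid_div_sigmoid, neg_mul] at hH
  exact hH.congr_of_eventuallyEq (Filter.Eventually.of_forall sigEnt_eq_binEntropy)

theorem HasDerivAt.hasGradientAt_inner_right {F : Type*} [NormedAddCommGroup F]
    [InnerProductSpace ℝ F] [CompleteSpace F] {f : ℝ → ℝ} {f' : ℝ} {x v : F}
    (hf : HasDerivAt f f' ⟪x, v⟫) : HasGradientAt (fun y => f ⟪y, v⟫) (f' • v) x := by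
  simp_rw [real_inner_comm v] at hf ⊢
  rw [hasGradientAt_iff_hasFDerivAt, map_smul]
  exact hf.comp_hasFDerivAt x (innerSL ℝ v).hasFDerivAt

theorem ite_pos_one_neg_one_mul_abs (a : ℝ) : (if 0 < a then 1 else -1) * |a| = a := by
  split_ifs with h
  · rw [one_mul, abs_of_pos h]
  · rw [abs_of_nonpos (not_lt.1 h), neg_one_mul, neg_neg]

theorem gradient_entropy_loss {d : ℕ} (θ v : EuclideanSpace ℝ (Fin d))
    (ha : ⟪θ, v⟫ ≠ 0)
    (yhat : ℝ) (hy : yhat = if 0 < ⟪θ, v⟫ then 1 else -1)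
    (p : ℝ) (hp : p = sigmoid ⟪θ, v⟫)
    (C : ℝ) (hC : C = |Real.log ((1 - p) / p) * p * (1 - p)|) :
    gradient (fun θ' : EuclideanSpace ℝ (Fin d) => sigEnt ⟪θ', v⟫) θ
      = (-yhat * C) • v ∧ 0 < C := by
  have hp₀ : 0 < p := hp ▸ sigmoid_pos _
  have hp₁ : 0 < 1 - p := hp ▸ sub_pos.2 (sigmoid_lt_one _)
  have hC' : C = |⟪θ, v⟫| * (p * (1 - p)) := by
    rw [hC, hp, log_one_sub_sigmoid_div_sigmoid, ← hp, mul_assoc, abs_mul, abs_neg,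
      abs_of_pos (mul_pos hp₀ hp₁)]
  refine ⟨?_, hC' ▸ mul_pos (abs_pos.2 ha) (mul_pos hp₀ hp₁)⟩
  rw [(hasDerivAt_sigEnt _).hasGradientAt_inner_right.gradient, hC', hy, ← hp, neg_mul,
    ← mul_assoc _ |_|, ite_pos_one_neg_one_mul_abs]
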